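/- arXiv:2605.23082 — 5 statements merged into one kernel-verified Lean document; each statement's English description precedes it below -/
import Mathlib

section
/- Let B ≥ 0 and let g₁, g₂ : [0,1]^d × [0,1] → ℝ be measurable with ‖g₁‖_∞ ≤ B and ‖g₂‖_∞ ≤ B. Then for every x ∈ [0,1]^d and y ∈ [0,1], |(g₁(x,y) − Λ_{g₁}(y | x)) − (g₂(x,y) − Λ_{g₂}(y | x))| ≤ (1 + e^B) · ‖g₁ − g₂‖_∞. Equivalently, the log-likelihood ratio of the event-time densities e^{g₁(x,y)} e^{−Λ_{g₁}(y|x)} and e^{g₂(x,y)} e^{−Λ_{g₂}(y|x)} is bounded in absolute value by (1 + e^B)‖g₁ − g₂‖_∞. -/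
/-- Cumulative hazard `Λ_g(y | x) = ∫_0^y exp(g(x,s)) ds`. -/
noncomputable def cumHaz (d : ℕ) (g : (Fin d → ℝ) → ℝ → ℝ) (x : Fin d → ℝ) (y : ℝ) : ℝ :=
  ∫ s in (0 : ℝ)..y, Real.exp (g x s)

lemma abs_exp_sub_exp_le {a b B : ℝ} (ha : |a| ≤ B) (hb : |b| ≤ B) :
    |Real.exp a - Real.exp b| ≤ Real.exp B * |a - b| := by
  have key : ∀ u v : ℝ, v ≤ u → |u| ≤ B → Real.exp u - Real.exp v ≤ Real.exp B * (u - v) := by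
    intro u v huv hu
    have h1 : Real.exp v ≥ Real.exp u * (1 + (v - u)) := by
      have := Real.add_one_le_exp (v - u)
      calc Real.exp u * (1 + (v - u)) = Real.exp u * ((v - u) + 1) := by ring
        _ ≤ Real.exp u * Real.exp (v - u) := by
            exact mul_le_mul_of_nonneg_left this (Real.exp_pos u).le
        _ = Real.exp v := by rw [← Real.exp_add]; ring_nf
    have h2 : Real.exp u ≤ Real.exp B := Real.exp_le_exp.mpr ((abs_le.mp hu).2)
    nlinarith [Real.exp_pos u, sub_nonneg.mpr huv]
  rcases le_total b a with h | h
  · rw [abs_of_nonneg (sub_nonneg.mpr (Real.exp_le_exp.mpr h)), abs_of_nonneg (sub_nonneg.mpr h)]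
    exact key a b h ha
  · rw [abs_of_nonpos (sub_nonpos.mpr (Real.exp_le_exp.mpr h)), abs_of_nonpos (sub_nonpos.mpr h),
      neg_sub, neg_sub]
    exact key b a h hb

/-- Let `B ≥ 0` and let `g₁, g₂ : [0,1]^d × [0,1] → ℝ` be measurable with `‖gᵢ‖_∞ ≤ B`.
If `η` is an upper bound for `|g₁ - g₂|` on the domain (in particular `η = ‖g₁ - g₂‖_∞`),
then for every `x ∈ [0,1]^d` and `y ∈ [0,1]`,
`|(g₁(x,y) − Λ_{g₁}(y|x)) − (g₂(x,y) − Λ_{g₂}(y|x))| ≤ (1 + e^B) · η`; equivalently the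
log-likelihood ratio of the event-time densities `e^{gᵢ(x,y)} e^{−Λ_{gᵢ}(y|x)}` is bounded in
absolute value by `(1 + e^B) · η`. -/
theorem loglik_ratio_event_density
    (d : ℕ) (B : ℝ) (hB : 0 ≤ B)
    (g₁ g₂ : (Fin d → ℝ) → ℝ → ℝ)
    (hm₁ : Measurable (Function.uncurry g₁)) (hm₂ : Measurable (Function.uncurry g₂))
    (hb₁ : ∀ x ∈ Set.Icc (0 : Fin d → ℝ) 1, ∀ t ∈ Set.Icc (0 : ℝ) 1, |g₁ x t| ≤ B)
    (hb₂ : ∀ x ∈ Set.Icc (0 : Fin d → ℝ) 1, ∀ t ∈ Set.Icc (0 : ℝ) 1, |g₂ x t| ≤ B)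
    (η : ℝ)
    (hη : ∀ x ∈ Set.Icc (0 : Fin d → ℝ) 1, ∀ t ∈ Set.Icc (0 : ℝ) 1, |g₁ x t - g₂ x t| ≤ η)
    (x : Fin d → ℝ) (hx : x ∈ Set.Icc (0 : Fin d → ℝ) 1)
    (y : ℝ) (hy : y ∈ Set.Icc (0 : ℝ) 1) :
    |(g₁ x y - cumHaz d g₁ x y) - (g₂ x y - cumHaz d g₂ x y)| ≤ (1 + Real.exp B) * η ∧
    |Real.log ((Real.exp (g₁ x y) * Real.exp (-(cumHaz d g₁ x y))) /
        (Real.exp (g₂ x y) * Real.exp (-(cumHaz d g₂ x y))))| ≤ (1 + Real.exp B) * η := by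
  obtain ⟨hy0, hy1⟩ := hy
  have hη0 : 0 ≤ η := le_trans (abs_nonneg _) (hη x hx y ⟨hy0, hy1⟩)
  -- measurability of the slices
  have hms₁ : Measurable (fun s => Real.exp (g₁ x s)) :=
    Real.measurable_exp.comp (hm₁.comp measurable_prodMk_left)
  have hms₂ : Measurable (fun s => Real.exp (g₂ x s)) :=
    Real.measurable_exp.comp (hm₂.comp measurable_prodMk_left)
  have hsub : Set.uIoc (0:ℝ) y ⊆ Set.Icc (0:ℝ) 1 := by
    rw [Set.uIoc_of_le hy0]
    exact fun s hs => ⟨hs.1.le, hs.2.trans hy1⟩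
  -- interval integrability
  have hi : ∀ (g : (Fin d → ℝ) → ℝ → ℝ), Measurable (fun s => Real.exp (g x s)) →
      (∀ t ∈ Set.Icc (0:ℝ) 1, |g x t| ≤ B) →
      IntervalIntegrable (fun s => Real.exp (g x s)) MeasureTheory.volume 0 y := by
    intro g hmg hbg
    rw [intervalIntegrable_iff]
    have hconst : MeasureTheory.IntegrableOn (fun _ : ℝ => Real.exp B) (Set.uIoc 0 y)
        MeasureTheory.volume := by
      refine (MeasureTheory.integrableOn_const_iff (C := Real.exp B)).mpr (Or.inr ?_)
      rw [Set.uIoc_of_le hy0]; exact measure_Ioc_lt_top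
    refine MeasureTheory.Integrable.mono' hconst hmg.aestronglyMeasurable ?_
    refine (MeasureTheory.ae_restrict_iff' measurableSet_uIoc).mpr
      (MeasureTheory.ae_of_all _ fun s hs => ?_)
    have hsB := hbg s (hsub hs)
    rw [Real.norm_eq_abs, abs_of_nonneg (Real.exp_pos _).le]
    exact Real.exp_le_exp.mpr ((abs_le.mp hsB).2)
  have hi₁ := hi g₁ hms₁ (hb₁ x hx)
  have hi₂ := hi g₂ hms₂ (hb₂ x hx)
  -- bound on the difference of cumulative hazards
  have hΛ : |cumHaz d g₁ x y - cumHaz d g₂ x y| ≤ Real.exp B * η := by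
    have heq : cumHaz d g₁ x y - cumHaz d g₂ x y =
        ∫ s in (0:ℝ)..y, (Real.exp (g₁ x s) - Real.exp (g₂ x s)) := by
      rw [intervalIntegral.integral_sub hi₁ hi₂]; rfl
    rw [heq, ← Real.norm_eq_abs]
    have := intervalIntegral.norm_integral_le_of_norm_le_const
      (C := Real.exp B * η) (f := fun s => Real.exp (g₁ x s) - Real.exp (g₂ x s))
      (a := (0:ℝ)) (b := y) ?_
    · calc _ ≤ Real.exp B * η * |y - 0| := this
        _ ≤ Real.exp B * η * 1 := by
            refine mul_le_mul_of_nonneg_left ?_ (by positivity)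
            rw [sub_zero, abs_of_nonneg hy0]; exact hy1
        _ = Real.exp B * η := by ring
    · intro s hs
      have hsI := hsub hs
      rw [Real.norm_eq_abs]
      calc |Real.exp (g₁ x s) - Real.exp (g₂ x s)|
          ≤ Real.exp B * |g₁ x s - g₂ x s| :=
            abs_exp_sub_exp_le (hb₁ x hx s hsI) (hb₂ x hx s hsI)
        _ ≤ Real.exp B * η :=
            mul_le_mul_of_nonneg_left (hη x hx s hsI) (Real.exp_pos B).le
  have hmain : |(g₁ x y - cumHaz d g₁ x y) - (g₂ x y - cumHaz d g₂ x y)| ≤ (1 + Real.exp B) * η := by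
    have h1 : (g₁ x y - cumHaz d g₁ x y) - (g₂ x y - cumHaz d g₂ x y) =
        (g₁ x y - g₂ x y) - (cumHaz d g₁ x y - cumHaz d g₂ x y) := by ring
    rw [h1]
    calc |(g₁ x y - g₂ x y) - (cumHaz d g₁ x y - cumHaz d g₂ x y)|
        ≤ |g₁ x y - g₂ x y| + |cumHaz d g₁ x y - cumHaz d g₂ x y| := abs_sub _ _
      _ ≤ η + Real.exp B * η := add_le_add (hη x hx y ⟨hy0, hy1⟩) hΛ
      _ = (1 + Real.exp B) * η := by ring
  refine ⟨hmain, ?_⟩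
  rw [← Real.exp_add, ← Real.exp_add, ← Real.exp_sub, Real.log_exp]
  have he : g₁ x y + -cumHaz d g₁ x y - (g₂ x y + -cumHaz d g₂ x y) =
      (g₁ x y - cumHaz d g₁ x y) - (g₂ x y - cumHaz d g₂ x y) := by ring
  rw [he]; exact hmain
end

section
/- Let B ≥ 0 and let g₁, g₂ : [0,1]^d × [0,1] → ℝ be measurable with ‖g₁‖_∞ ≤ B and ‖g₂‖_∞ ≤ B. Then for every x ∈ [0,1]^d and y ∈ [0,1], |exp(−Λ_{g₁}(y|x)/2) − exp(−Λ_{g₂}(y|x)/2)| ≤ (1/2) e^B · ‖g₁ − g₂‖_∞. -/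
lemma exp_sub_one_le_self_mul_exp {t : ℝ} (ht : 0 ≤ t) :
    Real.exp t - 1 ≤ t * Real.exp t := by
  have h := Real.add_one_le_exp (-t)
  have h2 : Real.exp (-t) * Real.exp t = 1 := by
    rw [← Real.exp_add]; simp
  nlinarith [Real.exp_pos t, Real.exp_pos (-t)]

lemma exp_sub_exp_le {u v B : ℝ} (hu : u ≤ B) (hv : v ≤ B) :
    Real.exp u - Real.exp v ≤ Real.exp B * |u - v| := by
  rcases le_total u v with h | h
  · have : Real.exp u - Real.exp v ≤ 0 := by
      have := Real.exp_le_exp.mpr h; linarith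
    have : 0 ≤ Real.exp B * |u - v| := by positivity
    linarith
  · have ht : 0 ≤ u - v := by linarith
    have h1 : Real.exp (u - v) - 1 ≤ (u - v) * Real.exp (u - v) :=
      exp_sub_one_le_self_mul_exp ht
    have h2 : Real.exp v * (Real.exp (u - v) - 1) ≤ Real.exp v * ((u - v) * Real.exp (u - v)) :=
      mul_le_mul_of_nonneg_left h1 (Real.exp_pos v).le
    have h3 : Real.exp v * Real.exp (u - v) = Real.exp u := by
      rw [← Real.exp_add]; ring_nf
    have h4 : Real.exp u ≤ Real.exp B := Real.exp_le_exp.mpr hu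
    have habs : |u - v| = u - v := abs_of_nonneg ht
    rw [habs]
    nlinarith [Real.exp_pos v, Real.exp_pos (u - v)]

lemma half_exp_neg_sub {a b : ℝ} (ha : 0 ≤ a) :
    Real.exp (-a / 2) - Real.exp (-b / 2) ≤ |a - b| / 2 := by
  rcases le_total b a with h | h
  · have : Real.exp (-a / 2) ≤ Real.exp (-b / 2) :=
      Real.exp_le_exp.mpr (by linarith)
    have : 0 ≤ |a - b| / 2 := by positivity
    linarith
  · -- a ≤ b
    have key : 1 - Real.exp (-((b - a) / 2)) ≤ (b - a) / 2 := by
      have := Real.add_one_le_exp (-((b - a) / 2))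
      linarith
    have hsplit : Real.exp (-a / 2) - Real.exp (-b / 2)
        = Real.exp (-a / 2) * (1 - Real.exp (-((b - a) / 2))) := by
      rw [mul_sub, mul_one, ← Real.exp_add]; ring_nf
    have hle1 : Real.exp (-a / 2) ≤ 1 := Real.exp_le_one_iff.mpr (by linarith)
    have hnn : 0 ≤ 1 - Real.exp (-((b - a) / 2)) := by
      have : Real.exp (-((b - a) / 2)) ≤ 1 := Real.exp_le_one_iff.mpr (by linarith)
      linarith
    have habs : |a - b| = b - a := by rw [abs_sub_comm]; exact abs_of_nonneg (by linarith)
    calc Real.exp (-a / 2) - Real.exp (-b / 2)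
        = Real.exp (-a / 2) * (1 - Real.exp (-((b - a) / 2))) := hsplit
      _ ≤ 1 * (1 - Real.exp (-((b - a) / 2))) := mul_le_mul_of_nonneg_right hle1 hnn
      _ = 1 - Real.exp (-((b - a) / 2)) := one_mul _
      _ ≤ (b - a) / 2 := key
      _ = |a - b| / 2 := by rw [habs]

/-- Let `B ≥ 0` and let `g₁, g₂ : [0,1]^d × [0,1] → ℝ` be measurable with `‖gᵢ‖_∞ ≤ B`.
If `η` bounds `|g₁ - g₂|` on the domain (in particular `η = ‖g₁ - g₂‖_∞`), then for every
`x ∈ [0,1]^d` and `y ∈ [0,1]`,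
`|exp(−Λ_{g₁}(y|x)/2) − exp(−Λ_{g₂}(y|x)/2)| ≤ (1/2) e^B · η`. -/
theorem half_survival_lipschitz
    (d : ℕ) (B : ℝ) (hB : 0 ≤ B)
    (g₁ g₂ : (Fin d → ℝ) → ℝ → ℝ)
    (hm₁ : Measurable (Function.uncurry g₁)) (hm₂ : Measurable (Function.uncurry g₂))
    (hb₁ : ∀ x ∈ Set.Icc (0 : Fin d → ℝ) 1, ∀ t ∈ Set.Icc (0 : ℝ) 1, |g₁ x t| ≤ B)
    (hb₂ : ∀ x ∈ Set.Icc (0 : Fin d → ℝ) 1, ∀ t ∈ Set.Icc (0 : ℝ) 1, |g₂ x t| ≤ B)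
    (η : ℝ)
    (hη : ∀ x ∈ Set.Icc (0 : Fin d → ℝ) 1, ∀ t ∈ Set.Icc (0 : ℝ) 1, |g₁ x t - g₂ x t| ≤ η)
    (x : Fin d → ℝ) (hx : x ∈ Set.Icc (0 : Fin d → ℝ) 1)
    (y : ℝ) (hy : y ∈ Set.Icc (0 : ℝ) 1) :
    |Real.exp (-(cumHaz d g₁ x y) / 2) - Real.exp (-(cumHaz d g₂ x y) / 2)| ≤
      (1 / 2) * Real.exp B * η := by
  obtain ⟨hy0, hy1⟩ := hy
  -- measurability of the slices
  have hms₁ : Measurable (fun s => g₁ x s) :=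
    hm₁.comp (measurable_const.prodMk measurable_id)
  have hms₂ : Measurable (fun s => g₂ x s) :=
    hm₂.comp (measurable_const.prodMk measurable_id)
  -- integrability of exp ∘ g on [0, y]
  have hexpB : ∀ s ∈ Set.Icc (0:ℝ) 1, Real.exp (g₁ x s) ≤ Real.exp B ∧
      Real.exp (g₂ x s) ≤ Real.exp B := fun s hs =>
    ⟨Real.exp_le_exp.mpr ((abs_le.mp (hb₁ x hx s hs)).2),
     Real.exp_le_exp.mpr ((abs_le.mp (hb₂ x hx s hs)).2)⟩
  have hint : ∀ (g : ℝ → ℝ), Measurable g → (∀ s ∈ Set.Icc (0:ℝ) 1, g s ≤ B) →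
      IntervalIntegrable (fun s => Real.exp (g s)) MeasureTheory.volume 0 y := by
    intro g hg hgB
    rw [intervalIntegrable_iff_integrableOn_Ioc_of_le hy0]
    refine MeasureTheory.Integrable.mono' (MeasureTheory.integrable_const (Real.exp B))
      ((Real.measurable_exp.comp hg).aestronglyMeasurable) ?_
    filter_upwards [MeasureTheory.ae_restrict_mem measurableSet_Ioc] with s hs
    rw [Real.norm_eq_abs, abs_of_pos (Real.exp_pos _)]
    exact Real.exp_le_exp.mpr (hgB s ⟨hs.1.le, hs.2.trans hy1⟩)
  have hi₁ := hint _ hms₁ (fun s hs => (abs_le.mp (hb₁ x hx s hs)).2)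
  have hi₂ := hint _ hms₂ (fun s hs => (abs_le.mp (hb₂ x hx s hs)).2)
  -- nonnegativity of cumHaz
  have hnn : 0 ≤ cumHaz d g₁ x y := by
    unfold cumHaz
    exact intervalIntegral.integral_nonneg hy0 (fun s _ => (Real.exp_pos _).le)
  have hnn2 : 0 ≤ cumHaz d g₂ x y := by
    unfold cumHaz
    exact intervalIntegral.integral_nonneg hy0 (fun s _ => (Real.exp_pos _).le)
  -- bound on |Λ₁ - Λ₂|
  have hη0 : 0 ≤ η := le_trans (abs_nonneg _) (hη x hx 0 ⟨le_refl _, zero_le_one⟩)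
  have hΛ : |cumHaz d g₁ x y - cumHaz d g₂ x y| ≤ Real.exp B * η := by
    have hsub : cumHaz d g₁ x y - cumHaz d g₂ x y
        = ∫ s in (0:ℝ)..y, (Real.exp (g₁ x s) - Real.exp (g₂ x s)) :=
      (intervalIntegral.integral_sub hi₁ hi₂).symm
    rw [hsub]
    have := intervalIntegral.norm_integral_le_of_norm_le_const
      (C := Real.exp B * η) (f := fun s => Real.exp (g₁ x s) - Real.exp (g₂ x s))
      (a := (0:ℝ)) (b := y) ?_
    · rw [Real.norm_eq_abs] at this
      have hyabs : |y - 0| ≤ 1 := by rw [abs_of_nonneg (by linarith)]; linarith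
      calc |∫ s in (0:ℝ)..y, (Real.exp (g₁ x s) - Real.exp (g₂ x s))|
          ≤ Real.exp B * η * |y - 0| := this
        _ ≤ Real.exp B * η * 1 := by
            apply mul_le_mul_of_nonneg_left hyabs; positivity
        _ = Real.exp B * η := mul_one _
    · intro s hs
      have hsIcc : s ∈ Set.Icc (0:ℝ) 1 := by
        rcases Set.mem_uIoc.mp hs with ⟨h1, h2⟩ | ⟨h1, h2⟩
        · exact ⟨h1.le, h2.trans hy1⟩
        · constructor <;> [linarith; linarith]
      have hub₁ := (abs_le.mp (hb₁ x hx s hsIcc)).2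
      have hub₂ := (abs_le.mp (hb₂ x hx s hsIcc)).2
      rw [Real.norm_eq_abs]
      show |Real.exp (g₁ x s) - Real.exp (g₂ x s)| ≤ Real.exp B * η
      rw [abs_le]
      constructor
      · have := exp_sub_exp_le hub₂ hub₁
        have h2 : Real.exp B * |g₂ x s - g₁ x s| ≤ Real.exp B * η := by
          apply mul_le_mul_of_nonneg_left _ (Real.exp_pos B).le
          rw [abs_sub_comm]; exact hη x hx s hsIcc
        linarith
      · have := exp_sub_exp_le hub₁ hub₂
        have h2 : Real.exp B * |g₁ x s - g₂ x s| ≤ Real.exp B * η :=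
          mul_le_mul_of_nonneg_left (hη x hx s hsIcc) (Real.exp_pos B).le
        linarith
  -- conclude
  have h1 := half_exp_neg_sub (a := cumHaz d g₁ x y) (b := cumHaz d g₂ x y) hnn
  have h2 := half_exp_neg_sub (a := cumHaz d g₂ x y) (b := cumHaz d g₁ x y) hnn2
  rw [abs_sub_comm] at h2
  rw [abs_le]
  constructor
  · nlinarith [abs_nonneg (cumHaz d g₁ x y - cumHaz d g₂ x y)]
  · nlinarith [abs_nonneg (cumHaz d g₁ x y - cumHaz d g₂ x y)]
end

section
/- Let B ≥ 0 and let g₁, g₂ : [0,1]^d × [0,1] → ℝ be measurable with ‖g₁‖_∞ ≤ B and ‖g₂‖_∞ ≤ B. Then for every x ∈ [0,1]^d and y ∈ [0,1], |e^{g₁(x,y)/2} · e^{−Λ_{g₁}(y|x)/2} − e^{g₂(x,y)/2} · e^{−Λ_{g₂}(y|x)/2}| ≤ e^{3B/2} · ‖g₁ − g₂‖_∞. -/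
lemma exp_lip (u v M : ℝ) (hu : u ≤ M) (hv : v ≤ M) :
    |Real.exp u - Real.exp v| ≤ Real.exp M * |u - v| := by
  have key : ∀ a b : ℝ, b ≤ a → a ≤ M → Real.exp a - Real.exp b ≤ Real.exp M * (a - b) := by
    intro a b hba haM
    have h1 : (b - a + 1) * Real.exp a ≤ Real.exp (b - a) * Real.exp a :=
      mul_le_mul_of_nonneg_right (Real.add_one_le_exp _) (Real.exp_pos a).le
    rw [← Real.exp_add] at h1
    have h2 : b - a + a = b := by ring
    rw [h2] at h1
    have hM : Real.exp a ≤ Real.exp M := Real.exp_le_exp.2 haM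
    nlinarith [Real.exp_pos a]
  rcases le_total v u with h | h
  · rw [abs_of_nonneg (sub_nonneg.2 (Real.exp_le_exp.2 h)), abs_of_nonneg (sub_nonneg.2 h)]
    exact key u v h hu
  · rw [abs_of_nonpos (sub_nonpos.2 (Real.exp_le_exp.2 h)), abs_of_nonpos (sub_nonpos.2 h)]
    rw [neg_sub, neg_sub]
    exact key v u h hv

/-- Let `B ≥ 0` and let `g₁, g₂ : [0,1]^d × [0,1] → ℝ` be measurable with `‖gᵢ‖_∞ ≤ B`.
If `η` bounds `|g₁ - g₂|` on the domain (in particular `η = ‖g₁ - g₂‖_∞`), then for every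
`x ∈ [0,1]^d` and `y ∈ [0,1]`,
`|e^{g₁(x,y)/2} e^{−Λ_{g₁}(y|x)/2} − e^{g₂(x,y)/2} e^{−Λ_{g₂}(y|x)/2}| ≤ e^{3B/2} · η`. -/
theorem product_lipschitz
    (d : ℕ) (B : ℝ) (hB : 0 ≤ B)
    (g₁ g₂ : (Fin d → ℝ) → ℝ → ℝ)
    (hm₁ : Measurable (Function.uncurry g₁)) (hm₂ : Measurable (Function.uncurry g₂))
    (hb₁ : ∀ x ∈ Set.Icc (0 : Fin d → ℝ) 1, ∀ t ∈ Set.Icc (0 : ℝ) 1, |g₁ x t| ≤ B)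
    (hb₂ : ∀ x ∈ Set.Icc (0 : Fin d → ℝ) 1, ∀ t ∈ Set.Icc (0 : ℝ) 1, |g₂ x t| ≤ B)
    (η : ℝ)
    (hη : ∀ x ∈ Set.Icc (0 : Fin d → ℝ) 1, ∀ t ∈ Set.Icc (0 : ℝ) 1, |g₁ x t - g₂ x t| ≤ η)
    (x : Fin d → ℝ) (hx : x ∈ Set.Icc (0 : Fin d → ℝ) 1)
    (y : ℝ) (hy : y ∈ Set.Icc (0 : ℝ) 1) :
    |Real.exp (g₁ x y / 2) * Real.exp (-(cumHaz d g₁ x y) / 2) -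
        Real.exp (g₂ x y / 2) * Real.exp (-(cumHaz d g₂ x y) / 2)| ≤
      Real.exp (3 * B / 2) * η := by
  obtain ⟨hy0, hy1⟩ := hy
  have hη0 : 0 ≤ η := le_trans (abs_nonneg _) (hη x hx y ⟨hy0, hy1⟩)
  have hsub : Set.uIoc (0:ℝ) y ⊆ Set.Icc (0:ℝ) 1 := by
    rw [Set.uIoc_of_le hy0]
    exact fun s hs => ⟨le_of_lt hs.1, le_trans hs.2 hy1⟩
  -- measurability
  have hms₁ : Measurable fun s => Real.exp (g₁ x s) :=
    Real.measurable_exp.comp (hm₁.comp measurable_prodMk_left)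
  have hms₂ : Measurable fun s => Real.exp (g₂ x s) :=
    Real.measurable_exp.comp (hm₂.comp measurable_prodMk_left)
  -- integrability
  have hint : ∀ (g : (Fin d → ℝ) → ℝ → ℝ), (Measurable fun s => Real.exp (g x s)) →
      (∀ x ∈ Set.Icc (0 : Fin d → ℝ) 1, ∀ t ∈ Set.Icc (0 : ℝ) 1, |g x t| ≤ B) →
      IntervalIntegrable (fun s => Real.exp (g x s)) MeasureTheory.volume 0 y := by
    intro g hms hb
    apply IntervalIntegrable.mono_fun' (g := fun _ => Real.exp B)
      (intervalIntegrable_const) hms.aestronglyMeasurable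
    filter_upwards [MeasureTheory.ae_restrict_mem measurableSet_uIoc] with s hs
    have := hb x hx s (hsub hs)
    simp only [Real.norm_eq_abs, abs_of_pos (Real.exp_pos _)]
    exact Real.exp_le_exp.2 (le_trans (le_abs_self _) this)
  have hint₁ := hint g₁ hms₁ hb₁
  have hint₂ := hint g₂ hms₂ hb₂
  -- nonnegativity of cumHaz
  have hΛnn : ∀ (g : (Fin d → ℝ) → ℝ → ℝ), 0 ≤ cumHaz d g x y := by
    intro g
    exact intervalIntegral.integral_nonneg hy0 (fun s _ => (Real.exp_pos _).le)
  -- bounds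
  have hgb₁ := hb₁ x hx y ⟨hy0, hy1⟩
  have hgb₂ := hb₂ x hx y ⟨hy0, hy1⟩
  -- cumHaz difference bound
  have hΛdiff : |cumHaz d g₁ x y - cumHaz d g₂ x y| ≤ Real.exp B * η := by
    have : cumHaz d g₁ x y - cumHaz d g₂ x y
        = ∫ s in (0:ℝ)..y, (Real.exp (g₁ x s) - Real.exp (g₂ x s)) :=
      (intervalIntegral.integral_sub hint₁ hint₂).symm
    rw [this, ← Real.norm_eq_abs]
    calc ‖∫ s in (0:ℝ)..y, (Real.exp (g₁ x s) - Real.exp (g₂ x s))‖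
        ≤ Real.exp B * η * |y - 0| := by
          apply intervalIntegral.norm_integral_le_of_norm_le_const
          intro s hs
          have hsI := hsub hs
          rw [Real.norm_eq_abs]
          exact le_trans (exp_lip _ _ B (le_trans (le_abs_self _) (hb₁ x hx s hsI))
            (le_trans (le_abs_self _) (hb₂ x hx s hsI)))
            (mul_le_mul_of_nonneg_left (hη x hx s hsI) (Real.exp_pos B).le)
      _ ≤ Real.exp B * η := by
          rw [sub_zero, abs_of_nonneg hy0]
          nlinarith [mul_nonneg (Real.exp_pos B).le hη0, hy1]
  -- combine exponentials
  rw [← Real.exp_add, ← Real.exp_add]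
  have key := exp_lip (g₁ x y / 2 + -(cumHaz d g₁ x y) / 2) (g₂ x y / 2 + -(cumHaz d g₂ x y) / 2)
    (B / 2) (by nlinarith [hΛnn g₁, abs_le.1 hgb₁] ) (by nlinarith [hΛnn g₂, abs_le.1 hgb₂])
  refine le_trans key ?_
  have habs : |g₁ x y / 2 + -(cumHaz d g₁ x y) / 2 - (g₂ x y / 2 + -(cumHaz d g₂ x y) / 2)|
      ≤ η / 2 + Real.exp B * η / 2 := by
    have h1 : |g₁ x y - g₂ x y| ≤ η := hη x hx y ⟨hy0, hy1⟩
    have e : g₁ x y / 2 + -(cumHaz d g₁ x y) / 2 - (g₂ x y / 2 + -(cumHaz d g₂ x y) / 2)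
        = (g₁ x y - g₂ x y) / 2 - (cumHaz d g₁ x y - cumHaz d g₂ x y) / 2 := by ring
    rw [e]
    refine le_trans (abs_sub _ _) ?_
    rw [abs_div, abs_div]
    simp only [abs_two]
    linarith
  calc Real.exp (B/2) * |g₁ x y / 2 + -(cumHaz d g₁ x y) / 2 - (g₂ x y / 2 + -(cumHaz d g₂ x y) / 2)|
      ≤ Real.exp (B/2) * (η / 2 + Real.exp B * η / 2) :=
        mul_le_mul_of_nonneg_left habs (Real.exp_pos _).le
    _ ≤ Real.exp (3 * B / 2) * η := by
        have h3 : Real.exp (3 * B / 2) = Real.exp (B/2) * Real.exp B := by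
          rw [← Real.exp_add]; ring_nf
        rw [h3]
        have h1 : (1:ℝ) ≤ Real.exp B := Real.one_le_exp hB
        nlinarith [mul_nonneg (mul_nonneg (Real.exp_pos (B/2)).le hη0)
          (sub_nonneg.2 h1)]
end

section
/- Let B ≥ 0, let P_X be a Borel probability measure on [0,1]^d, let S_C : [0,1]^d × [0,1] → [0,1] be measurable, and let g₁, g₂ : [0,1]^d × [0,1] → ℝ be measurable with ‖g₁‖_∞ ≤ B and ‖g₂‖_∞ ≤ B. Writing a_g(x,y) = e^{g(x,y)/2} and b_g(y|x) = e^{−Λ_g(y|x)/2}, one has ∫_{[0,1]^d} ∫_0^1 S_C(y|x) · (a_{g₁}(x,y) b_{g₁}(y|x) − a_{g₂}(x,y) b_{g₂}(y|x))² dy dP_X(x) ≤ e^{3B} · ‖g₁ − g₂‖_∞². -/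
open MeasureTheory

lemma abs_exp_sub_exp_le_s8 (u v : ℝ) :
    |Real.exp u - Real.exp v| ≤ Real.exp (max u v) * |u - v| := by
  wlog h : v ≤ u generalizing u v
  · rw [abs_sub_comm, max_comm, abs_sub_comm u v]
    exact this _ _ (le_of_not_ge h)
  have h1 : Real.exp u * (1 + (v - u)) ≤ Real.exp v := by
    have h2 := Real.add_one_le_exp (v - u)
    have h3 : Real.exp u * Real.exp (v - u) = Real.exp v := by
      rw [← Real.exp_add]; ring_nf
    nlinarith [Real.exp_pos u]
  rw [abs_of_nonneg (sub_nonneg.2 (Real.exp_le_exp.2 h)),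
    abs_of_nonneg (sub_nonneg.2 h), max_eq_left h]
  nlinarith [Real.exp_pos u]

/-- **Event-stratum Hellinger bound.** Let `B ≥ 0`, `P_X` a Borel probability measure
concentrated on `[0,1]^d`, `S_C : [0,1]^d × [0,1] → [0,1]` measurable, and `g₁, g₂` measurable
log-hazards with `‖gᵢ‖_∞ ≤ B`.  With `a_g(x,y) = e^{g(x,y)/2}`, `b_g(y|x) = e^{−Λ_g(y|x)/2}`,
and `η` an upper bound for `|g₁ - g₂|` on the domain (in particular `η = ‖g₁ - g₂‖_∞`),
`∫∫ S_C(y|x) (a_{g₁} b_{g₁} − a_{g₂} b_{g₂})² dy dP_X ≤ e^{3B} · η²`. -/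
theorem event_stratum_hellinger_bound
    (d : ℕ) (B : ℝ) (hB : 0 ≤ B)
    (PX : Measure (Fin d → ℝ)) [IsProbabilityMeasure PX]
    (hPX : PX (Set.Icc (0 : Fin d → ℝ) 1) = 1)
    (SC : (Fin d → ℝ) → ℝ → ℝ) (hmSC : Measurable (Function.uncurry SC))
    (hSC : ∀ x ∈ Set.Icc (0 : Fin d → ℝ) 1, ∀ y ∈ Set.Icc (0 : ℝ) 1,
      SC x y ∈ Set.Icc (0 : ℝ) 1)
    (g₁ g₂ : (Fin d → ℝ) → ℝ → ℝ)
    (hm₁ : Measurable (Function.uncurry g₁)) (hm₂ : Measurable (Function.uncurry g₂))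
    (hb₁ : ∀ x ∈ Set.Icc (0 : Fin d → ℝ) 1, ∀ t ∈ Set.Icc (0 : ℝ) 1, |g₁ x t| ≤ B)
    (hb₂ : ∀ x ∈ Set.Icc (0 : Fin d → ℝ) 1, ∀ t ∈ Set.Icc (0 : ℝ) 1, |g₂ x t| ≤ B)
    (η : ℝ)
    (hη : ∀ x ∈ Set.Icc (0 : Fin d → ℝ) 1, ∀ t ∈ Set.Icc (0 : ℝ) 1, |g₁ x t - g₂ x t| ≤ η) :
    (∫ x, (∫ y in (0 : ℝ)..1, SC x y *
        (Real.exp (g₁ x y / 2) * Real.exp (-(cumHaz d g₁ x y) / 2) -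
          Real.exp (g₂ x y / 2) * Real.exp (-(cumHaz d g₂ x y) / 2)) ^ 2) ∂PX) ≤
      Real.exp (3 * B) * η ^ 2 := by
  have h0mem : (0 : Fin d → ℝ) ∈ Set.Icc (0 : Fin d → ℝ) 1 :=
    Set.mem_Icc.mpr ⟨le_refl _, zero_le_one⟩
  have h0mem' : (0 : ℝ) ∈ Set.Icc (0 : ℝ) 1 := Set.mem_Icc.mpr ⟨le_refl _, zero_le_one⟩
  have hηnn : 0 ≤ η := le_trans (abs_nonneg _) (hη 0 h0mem 0 h0mem')
  have hCnn : 0 ≤ Real.exp (3 * B) * η ^ 2 :=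
    mul_nonneg (Real.exp_pos _).le (sq_nonneg _)
  -- key pointwise bound
  have key : ∀ x ∈ Set.Icc (0 : Fin d → ℝ) 1, ∀ y ∈ Set.Ioc (0 : ℝ) 1,
      |Real.exp (g₁ x y / 2) * Real.exp (-(cumHaz d g₁ x y) / 2) -
        Real.exp (g₂ x y / 2) * Real.exp (-(cumHaz d g₂ x y) / 2)| ≤
      Real.exp (3 * B / 2) * η := by
    intro x hx y hy
    have hyI : y ∈ Set.Icc (0 : ℝ) 1 := ⟨le_of_lt hy.1, hy.2⟩
    have hΛ1 : 0 ≤ cumHaz d g₁ x y :=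
      intervalIntegral.integral_nonneg hy.1.le (fun s _ => (Real.exp_pos _).le)
    have hΛ2 : 0 ≤ cumHaz d g₂ x y :=
      intervalIntegral.integral_nonneg hy.1.le (fun s _ => (Real.exp_pos _).le)
    have hint : ∀ (g : (Fin d → ℝ) → ℝ → ℝ), Measurable (Function.uncurry g) →
        (∀ x ∈ Set.Icc (0 : Fin d → ℝ) 1, ∀ t ∈ Set.Icc (0 : ℝ) 1, |g x t| ≤ B) →
        IntervalIntegrable (fun s => Real.exp (g x s)) MeasureTheory.volume 0 y := by
      intro g hmg hbg
      rw [intervalIntegrable_iff]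
      apply MeasureTheory.Measure.integrableOn_of_bounded (M := Real.exp B)
      · rw [Set.uIoc_of_le hy.1.le, Real.volume_Ioc]; exact ENNReal.ofReal_ne_top
      · exact (Real.measurable_exp.comp (hmg.comp measurable_prodMk_left)).aestronglyMeasurable
      · filter_upwards [MeasureTheory.ae_restrict_mem measurableSet_uIoc] with s hs
        rw [Set.uIoc_of_le hy.1.le] at hs
        have hsI : s ∈ Set.Icc (0 : ℝ) 1 := ⟨hs.1.le, hs.2.trans hy.2⟩
        rw [Real.norm_eq_abs, abs_of_nonneg (Real.exp_pos _).le]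
        exact Real.exp_le_exp.2 (le_trans (le_abs_self _) (hbg x hx s hsI))
    have hΛdiff : |cumHaz d g₁ x y - cumHaz d g₂ x y| ≤ Real.exp B * η := by
      have hsub : cumHaz d g₁ x y - cumHaz d g₂ x y =
          ∫ s in (0 : ℝ)..y, (Real.exp (g₁ x s) - Real.exp (g₂ x s)) :=
        (intervalIntegral.integral_sub (hint g₁ hm₁ hb₁) (hint g₂ hm₂ hb₂)).symm
      rw [hsub, ← Real.norm_eq_abs]
      calc ‖∫ s in (0 : ℝ)..y, (Real.exp (g₁ x s) - Real.exp (g₂ x s))‖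
          ≤ (Real.exp B * η) * |y - 0| := by
            apply intervalIntegral.norm_integral_le_of_norm_le_const
            intro s hs
            rw [Set.uIoc_of_le hy.1.le] at hs
            have hsI : s ∈ Set.Icc (0 : ℝ) 1 := ⟨hs.1.le, hs.2.trans hy.2⟩
            have h1 := abs_exp_sub_exp_le_s8 (g₁ x s) (g₂ x s)
            have hmax : max (g₁ x s) (g₂ x s) ≤ B :=
              max_le (le_trans (le_abs_self _) (hb₁ x hx s hsI))
                (le_trans (le_abs_self _) (hb₂ x hx s hsI))
            rw [Real.norm_eq_abs]
            calc |Real.exp (g₁ x s) - Real.exp (g₂ x s)|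
                ≤ Real.exp (max (g₁ x s) (g₂ x s)) * |g₁ x s - g₂ x s| := h1
              _ ≤ Real.exp B * η := by
                  apply mul_le_mul (Real.exp_le_exp.2 hmax) (hη x hx s hsI)
                    (abs_nonneg _) (Real.exp_pos _).le
        _ ≤ Real.exp B * η := by
            rw [sub_zero, abs_of_nonneg hy.1.le]
            nlinarith [mul_nonneg (Real.exp_pos B).le hηnn, hy.2]
    -- a-part bound
    have ha : |Real.exp (g₁ x y / 2) - Real.exp (g₂ x y / 2)| ≤ Real.exp (B / 2) * (η / 2) := by
      have h1 := abs_exp_sub_exp_le_s8 (g₁ x y / 2) (g₂ x y / 2)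
      have hmax : max (g₁ x y / 2) (g₂ x y / 2) ≤ B / 2 := by
        have e1 := le_trans (le_abs_self _) (hb₁ x hx y hyI)
        have e2 := le_trans (le_abs_self _) (hb₂ x hx y hyI)
        apply max_le <;> linarith
      have hd : |g₁ x y / 2 - g₂ x y / 2| ≤ η / 2 := by
        rw [show g₁ x y / 2 - g₂ x y / 2 = (g₁ x y - g₂ x y) / 2 by ring, abs_div]
        have := hη x hx y hyI
        rw [abs_of_nonneg (by norm_num : (0:ℝ) ≤ 2)]
        linarith
      calc |Real.exp (g₁ x y / 2) - Real.exp (g₂ x y / 2)|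
          ≤ Real.exp (max (g₁ x y / 2) (g₂ x y / 2)) * |g₁ x y / 2 - g₂ x y / 2| := h1
        _ ≤ Real.exp (B / 2) * (η / 2) :=
            mul_le_mul (Real.exp_le_exp.2 hmax) hd (abs_nonneg _) (Real.exp_pos _).le
    -- b-part bound
    have hb : |Real.exp (-(cumHaz d g₁ x y) / 2) - Real.exp (-(cumHaz d g₂ x y) / 2)| ≤
        Real.exp B * η / 2 := by
      have h1 := abs_exp_sub_exp_le_s8 (-(cumHaz d g₁ x y) / 2) (-(cumHaz d g₂ x y) / 2)
      have hmax : Real.exp (max (-(cumHaz d g₁ x y) / 2) (-(cumHaz d g₂ x y) / 2)) ≤ 1 := by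
        apply Real.exp_le_one_iff.2
        apply max_le <;> linarith
      have hd : |(-(cumHaz d g₁ x y) / 2) - (-(cumHaz d g₂ x y) / 2)| ≤ Real.exp B * η / 2 := by
        rw [show (-(cumHaz d g₁ x y) / 2) - (-(cumHaz d g₂ x y) / 2) =
          -((cumHaz d g₁ x y - cumHaz d g₂ x y) / 2) by ring, abs_neg, abs_div]
        rw [abs_of_nonneg (by norm_num : (0:ℝ) ≤ 2)]
        linarith
      calc |Real.exp (-(cumHaz d g₁ x y) / 2) - Real.exp (-(cumHaz d g₂ x y) / 2)|
          ≤ Real.exp (max (-(cumHaz d g₁ x y) / 2) (-(cumHaz d g₂ x y) / 2)) *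
              |(-(cumHaz d g₁ x y) / 2) - (-(cumHaz d g₂ x y) / 2)| := h1
        _ ≤ 1 * (Real.exp B * η / 2) := mul_le_mul hmax hd (abs_nonneg _) zero_le_one
        _ = Real.exp B * η / 2 := one_mul _
    -- combine
    have hb₁le : Real.exp (-(cumHaz d g₁ x y) / 2) ≤ 1 := Real.exp_le_one_iff.2 (by linarith)
    have ha₂le : Real.exp (g₂ x y / 2) ≤ Real.exp (B / 2) :=
      Real.exp_le_exp.2 (by linarith [le_trans (le_abs_self _) (hb₂ x hx y hyI)])
    have hsplit : Real.exp (g₁ x y / 2) * Real.exp (-(cumHaz d g₁ x y) / 2) -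
        Real.exp (g₂ x y / 2) * Real.exp (-(cumHaz d g₂ x y) / 2) =
        (Real.exp (g₁ x y / 2) - Real.exp (g₂ x y / 2)) * Real.exp (-(cumHaz d g₁ x y) / 2) +
        Real.exp (g₂ x y / 2) *
          (Real.exp (-(cumHaz d g₁ x y) / 2) - Real.exp (-(cumHaz d g₂ x y) / 2)) := by ring
    rw [hsplit]
    have hexp32 : Real.exp (3 * B / 2) = Real.exp (B / 2) * Real.exp B := by
      rw [← Real.exp_add]; ring_nf
    have h1B : 1 ≤ Real.exp B := Real.one_le_exp hB
    calc |(Real.exp (g₁ x y / 2) - Real.exp (g₂ x y / 2)) * Real.exp (-(cumHaz d g₁ x y) / 2) +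
        Real.exp (g₂ x y / 2) *
          (Real.exp (-(cumHaz d g₁ x y) / 2) - Real.exp (-(cumHaz d g₂ x y) / 2))|
        ≤ |Real.exp (g₁ x y / 2) - Real.exp (g₂ x y / 2)| * Real.exp (-(cumHaz d g₁ x y) / 2) +
          Real.exp (g₂ x y / 2) *
            |Real.exp (-(cumHaz d g₁ x y) / 2) - Real.exp (-(cumHaz d g₂ x y) / 2)| := by
          refine (abs_add_le _ _).trans ?_
          rw [abs_mul, abs_mul, abs_of_nonneg (Real.exp_pos _).le,
            abs_of_nonneg (Real.exp_pos _).le]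
      _ ≤ Real.exp (B / 2) * (η / 2) * 1 + Real.exp (B / 2) * (Real.exp B * η / 2) := by
          have t1 : |Real.exp (g₁ x y / 2) - Real.exp (g₂ x y / 2)| *
              Real.exp (-(cumHaz d g₁ x y) / 2) ≤ Real.exp (B / 2) * (η / 2) * 1 := by
            rw [mul_one]
            calc |Real.exp (g₁ x y / 2) - Real.exp (g₂ x y / 2)| *
                Real.exp (-(cumHaz d g₁ x y) / 2)
                ≤ (Real.exp (B / 2) * (η / 2)) * 1 :=
                  mul_le_mul ha hb₁le (Real.exp_pos _).le
                    (mul_nonneg (Real.exp_pos _).le (by linarith))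
              _ = Real.exp (B / 2) * (η / 2) := mul_one _
          have t2 : Real.exp (g₂ x y / 2) *
              |Real.exp (-(cumHaz d g₁ x y) / 2) - Real.exp (-(cumHaz d g₂ x y) / 2)| ≤
              Real.exp (B / 2) * (Real.exp B * η / 2) :=
            mul_le_mul ha₂le hb (abs_nonneg _) (Real.exp_pos _).le
          linarith
      _ ≤ Real.exp (3 * B / 2) * η := by
          rw [hexp32]
          nlinarith [mul_nonneg (mul_nonneg (Real.exp_pos (B / 2)).le
            (sub_nonneg.2 h1B)) hηnn]
  -- from the pointwise bound to the inner integral bound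
  have hinner : ∀ x ∈ Set.Icc (0 : Fin d → ℝ) 1,
      ‖∫ y in (0 : ℝ)..1, SC x y *
        (Real.exp (g₁ x y / 2) * Real.exp (-(cumHaz d g₁ x y) / 2) -
          Real.exp (g₂ x y / 2) * Real.exp (-(cumHaz d g₂ x y) / 2)) ^ 2‖ ≤
      Real.exp (3 * B) * η ^ 2 := by
    intro x hx
    have := intervalIntegral.norm_integral_le_of_norm_le_const
      (a := (0:ℝ)) (b := 1) (C := Real.exp (3 * B) * η ^ 2)
      (f := fun y => SC x y *
        (Real.exp (g₁ x y / 2) * Real.exp (-(cumHaz d g₁ x y) / 2) -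
          Real.exp (g₂ x y / 2) * Real.exp (-(cumHaz d g₂ x y) / 2)) ^ 2) ?_
    · simpa using this
    intro y hy
    rw [Set.uIoc_of_le zero_le_one] at hy
    have hyI : y ∈ Set.Icc (0 : ℝ) 1 := ⟨hy.1.le, hy.2⟩
    have hSCy := hSC x hx y hyI
    have hk := key x hx y hy
    have hsq : (Real.exp (g₁ x y / 2) * Real.exp (-(cumHaz d g₁ x y) / 2) -
        Real.exp (g₂ x y / 2) * Real.exp (-(cumHaz d g₂ x y) / 2)) ^ 2 ≤
        (Real.exp (3 * B / 2) * η) ^ 2 := by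
      rw [← sq_abs]
      exact pow_le_pow_left₀ (abs_nonneg _) hk 2
    have hexp : (Real.exp (3 * B / 2) * η) ^ 2 = Real.exp (3 * B) * η ^ 2 := by
      rw [mul_pow, sq (Real.exp (3 * B / 2)), ← Real.exp_add]; ring_nf
    rw [Real.norm_eq_abs, abs_mul, abs_of_nonneg hSCy.1, abs_pow, sq_abs]
    calc SC x y * (Real.exp (g₁ x y / 2) * Real.exp (-(cumHaz d g₁ x y) / 2) -
          Real.exp (g₂ x y / 2) * Real.exp (-(cumHaz d g₂ x y) / 2)) ^ 2
        ≤ 1 * ((Real.exp (3 * B / 2) * η) ^ 2) :=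
          mul_le_mul hSCy.2 hsq (sq_nonneg _) zero_le_one
      _ = Real.exp (3 * B) * η ^ 2 := by rw [one_mul, hexp]
  -- outer integral
  have hae : ∀ᵐ x ∂PX, ‖∫ y in (0 : ℝ)..1, SC x y *
        (Real.exp (g₁ x y / 2) * Real.exp (-(cumHaz d g₁ x y) / 2) -
          Real.exp (g₂ x y / 2) * Real.exp (-(cumHaz d g₂ x y) / 2)) ^ 2‖ ≤
      Real.exp (3 * B) * η ^ 2 := by
    have hcompl : PX (Set.Icc (0 : Fin d → ℝ) 1)ᶜ = 0 := by
      rw [measure_compl measurableSet_Icc (measure_ne_top _ _), hPX, measure_univ]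
      simp
    filter_upwards [MeasureTheory.mem_ae_iff.2 hcompl] with x hx
    exact hinner x hx
  calc (∫ x, (∫ y in (0 : ℝ)..1, SC x y *
        (Real.exp (g₁ x y / 2) * Real.exp (-(cumHaz d g₁ x y) / 2) -
          Real.exp (g₂ x y / 2) * Real.exp (-(cumHaz d g₂ x y) / 2)) ^ 2) ∂PX)
      ≤ ‖(∫ x, (∫ y in (0 : ℝ)..1, SC x y *
        (Real.exp (g₁ x y / 2) * Real.exp (-(cumHaz d g₁ x y) / 2) -
          Real.exp (g₂ x y / 2) * Real.exp (-(cumHaz d g₂ x y) / 2)) ^ 2) ∂PX)‖ :=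
        le_abs_self _
    _ ≤ (Real.exp (3 * B) * η ^ 2) * (PX Set.univ).toReal :=
        norm_integral_le_of_norm_le_const hae
    _ = Real.exp (3 * B) * η ^ 2 := by simp
end

section
/- Let τ ∈ (0, 1], B ≥ 0, let P_X be a Borel probability measure on [0,1]^d, and let g₁, g₂ : [0,1]^d × [0,1] → ℝ be measurable with ‖g₁‖_∞ ≤ B and ‖g₂‖_∞ ≤ B. Then ∫_{[0,1]^d} ∫_0^τ (S_{g₁}(t|x) − S_{g₂}(t|x))² dt dP_X(x) ≤ e^{2B} · ∫_{[0,1]^d} ∫_0^τ (g₁(x,s) − g₂(x,s))² ds dP_X(x). -/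
open MeasureTheory

/- Auxiliary lemmas -/

/-- Lipschitz bound for `exp` below a threshold. -/
lemma aux_abs_exp_sub_exp {a b B : ℝ} (ha : a ≤ B) (hb : b ≤ B) :
    |Real.exp a - Real.exp b| ≤ Real.exp B * |a - b| := by
  rcases le_total b a with hba | hab
  · rw [abs_of_nonneg (sub_nonneg.2 (Real.exp_le_exp.2 hba)), abs_of_nonneg (sub_nonneg.2 hba)]
    have h1 : Real.exp a * Real.exp (b - a) = Real.exp b := by
      rw [← Real.exp_add]; ring_nf
    have h2 : b - a + 1 ≤ Real.exp (b - a) := Real.add_one_le_exp _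
    have h3 : Real.exp a ≤ Real.exp B := Real.exp_le_exp.2 ha
    have h4 : (0:ℝ) < Real.exp a := Real.exp_pos a
    nlinarith
  · rw [abs_of_nonpos (sub_nonpos.2 (Real.exp_le_exp.2 hab)), abs_of_nonpos (sub_nonpos.2 hab)]
    have h1 : Real.exp b * Real.exp (a - b) = Real.exp a := by
      rw [← Real.exp_add]; ring_nf
    have h2 : a - b + 1 ≤ Real.exp (a - b) := Real.add_one_le_exp _
    have h3 : Real.exp b ≤ Real.exp B := Real.exp_le_exp.2 hb
    have h4 : (0:ℝ) < Real.exp b := Real.exp_pos b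
    nlinarith

/-- Cauchy–Schwarz: `(∫ f)² ≤ μ(univ) ∫ f²` on a finite measure space. -/
lemma aux_sq_integral_le {α : Type*} [MeasurableSpace α] (μ : Measure α) [IsFiniteMeasure μ]
    (f : α → ℝ) (hf : Integrable f μ) (hf2 : Integrable (fun t => f t ^ 2) μ) :
    (∫ t, f t ∂μ) ^ 2 ≤ (μ Set.univ).toReal * ∫ t, f t ^ 2 ∂μ := by
  set m := (μ Set.univ).toReal with hm
  set I := ∫ t, f t ∂μ with hI
  set J := ∫ t, f t ^ 2 ∂μ with hJ
  have key : ∀ x : ℝ, 0 ≤ m * (x * x) + (-2 * I) * x + J := by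
    intro x
    have h0 : 0 ≤ ∫ t, (x - f t) ^ 2 ∂μ := integral_nonneg fun t => sq_nonneg _
    have hexp : ∫ t, (x - f t) ^ 2 ∂μ = m * (x * x) + (-2 * I) * x + J := by
      have : (fun t => (x - f t) ^ 2) = fun t => x * x - 2 * x * f t + f t ^ 2 := by
        funext t; ring
      rw [this]
      have h1 : Integrable (fun t => x * x - 2 * x * f t) μ := by
        exact (integrable_const (x*x)).sub (hf.const_mul (2*x))
      rw [integral_add h1 hf2,
        integral_sub (integrable_const (x*x)) (hf.const_mul (2*x)),
        integral_const, MeasureTheory.integral_const_mul]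
      simp only [smul_eq_mul, measureReal_def, hm, hI, hJ]
      ring
    linarith [hexp ▸ h0]
  have hd := discrim_le_zero key
  rw [discrim] at hd
  nlinarith [hd]

/-- Interval integrability of a measurable function bounded on `[0,1]`. -/
lemma aux_intervalIntegrable {f : ℝ → ℝ} (hf : Measurable f) {C : ℝ}
    (hbd : ∀ s ∈ Set.Icc (0:ℝ) 1, |f s| ≤ C) {t : ℝ} (ht0 : 0 ≤ t) (ht1 : t ≤ 1) :
    IntervalIntegrable f MeasureTheory.volume 0 t := by
  rw [intervalIntegrable_iff_integrableOn_Ioc_of_le ht0]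
  refine Integrable.mono' (integrable_const C) hf.aestronglyMeasurable.restrict ?_
  rw [ae_restrict_iff' measurableSet_Ioc]
  exact Filter.Eventually.of_forall fun s hs => by
    rw [Real.norm_eq_abs]; exact hbd s ⟨hs.1.le, hs.2.trans ht1⟩

/-- The pointwise-in-`x` key estimate. -/
lemma aux_key (τ B : ℝ) (hτ0 : 0 < τ) (hτ1 : τ ≤ 1) (hB : 0 ≤ B)
    (f₁ f₂ : ℝ → ℝ) (hmf₁ : Measurable f₁) (hmf₂ : Measurable f₂)
    (hb₁ : ∀ t ∈ Set.Icc (0:ℝ) 1, |f₁ t| ≤ B) (hb₂ : ∀ t ∈ Set.Icc (0:ℝ) 1, |f₂ t| ≤ B) :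
    (∫ t in (0:ℝ)..τ,
        (Real.exp (-(∫ s in (0:ℝ)..t, Real.exp (f₁ s)))
          - Real.exp (-(∫ s in (0:ℝ)..t, Real.exp (f₂ s)))) ^ 2)
      ≤ Real.exp (2 * B) * ∫ s in (0:ℝ)..τ, (f₁ s - f₂ s) ^ 2 := by
  set e₁ : ℝ → ℝ := fun s => Real.exp (f₁ s) with he₁
  set e₂ : ℝ → ℝ := fun s => Real.exp (f₂ s) with he₂
  have me₁ : Measurable e₁ := Real.measurable_exp.comp hmf₁
  have me₂ : Measurable e₂ := Real.measurable_exp.comp hmf₂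
  have hbe₁ : ∀ s ∈ Set.Icc (0:ℝ) 1, |e₁ s| ≤ Real.exp B := fun s hs => by
    rw [he₁, abs_of_pos (Real.exp_pos _)]
    exact Real.exp_le_exp.2 ((abs_le.1 (hb₁ s hs)).2)
  have hbe₂ : ∀ s ∈ Set.Icc (0:ℝ) 1, |e₂ s| ≤ Real.exp B := fun s hs => by
    rw [he₂, abs_of_pos (Real.exp_pos _)]
    exact Real.exp_le_exp.2 ((abs_le.1 (hb₂ s hs)).2)
  set Δ : ℝ → ℝ := fun s => f₁ s - f₂ s with hΔ
  have mΔ : Measurable Δ := hmf₁.sub hmf₂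
  have hbΔ : ∀ s ∈ Set.Icc (0:ℝ) 1, |Δ s| ≤ 2 * B := fun s hs => by
    rw [hΔ]
    calc |f₁ s - f₂ s| ≤ |f₁ s| + |f₂ s| := abs_sub _ _
      _ ≤ 2 * B := by linarith [hb₁ s hs, hb₂ s hs]
  set Λ₁ : ℝ → ℝ := fun t => ∫ s in (0:ℝ)..t, e₁ s with hΛ₁
  set Λ₂ : ℝ → ℝ := fun t => ∫ s in (0:ℝ)..t, e₂ s with hΛ₂
  have hΛ₁0 : ∀ t ∈ Set.Icc (0:ℝ) τ, 0 ≤ Λ₁ t := fun t ht =>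
    intervalIntegral.integral_nonneg ht.1 fun u _ => (Real.exp_pos _).le
  have hΛ₂0 : ∀ t ∈ Set.Icc (0:ℝ) τ, 0 ≤ Λ₂ t := fun t ht =>
    intervalIntegral.integral_nonneg ht.1 fun u _ => (Real.exp_pos _).le
  set M : ℝ := Real.exp B * ∫ s in (0:ℝ)..τ, |Δ s| with hM
  have hIabs : (0:ℝ) ≤ ∫ s in (0:ℝ)..τ, |Δ s| :=
    intervalIntegral.integral_nonneg hτ0.le fun u _ => abs_nonneg _
  have hM0 : 0 ≤ M := mul_nonneg (Real.exp_pos _).le hIabs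
  -- integrability facts
  have iΔabs : IntervalIntegrable (fun s => Real.exp B * |Δ s|) MeasureTheory.volume 0 τ := by
    refine aux_intervalIntegrable (measurable_const.mul mΔ.abs) (C := Real.exp B * (2 * B))
      (fun s hs => ?_) hτ0.le hτ1
    show |(Real.exp B * |Δ s|)| ≤ Real.exp B * (2 * B)
    rw [abs_of_nonneg (mul_nonneg (Real.exp_pos _).le (abs_nonneg _))]
    exact mul_le_mul_of_nonneg_left (hbΔ s hs) (Real.exp_pos _).le
  have iΔsq : IntervalIntegrable (fun s => Δ s ^ 2) MeasureTheory.volume 0 τ := by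
    refine aux_intervalIntegrable (mΔ.pow_const 2) (C := (2 * B) ^ 2)
      (fun s hs => ?_) hτ0.le hτ1
    rw [abs_of_nonneg (sq_nonneg _)]
    calc Δ s ^ 2 = |Δ s| ^ 2 := (sq_abs _).symm
      _ ≤ (2 * B) ^ 2 := by nlinarith [hbΔ s hs, abs_nonneg (Δ s)]
  -- bound on the cumulative hazards
  have hΛdiff : ∀ t ∈ Set.Icc (0:ℝ) τ, |Λ₁ t - Λ₂ t| ≤ M := by
    intro t ht
    have hsub : Set.Icc (0:ℝ) t ⊆ Set.Icc (0:ℝ) 1 :=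
      Set.Icc_subset_Icc le_rfl (ht.2.trans hτ1)
    have ie₁ : IntervalIntegrable e₁ MeasureTheory.volume 0 t :=
      aux_intervalIntegrable me₁ hbe₁ ht.1 (ht.2.trans hτ1)
    have ie₂ : IntervalIntegrable e₂ MeasureTheory.volume 0 t :=
      aux_intervalIntegrable me₂ hbe₂ ht.1 (ht.2.trans hτ1)
    have idif : IntervalIntegrable (fun s => |e₁ s - e₂ s|) MeasureTheory.volume 0 t := by
      refine aux_intervalIntegrable (me₁.sub me₂).abs (C := 2 * Real.exp B)
        (fun s hs => ?_) ht.1 (ht.2.trans hτ1)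
      rw [abs_abs]
      calc |e₁ s - e₂ s| ≤ |e₁ s| + |e₂ s| := abs_sub _ _
        _ ≤ 2 * Real.exp B := by linarith [hbe₁ s hs, hbe₂ s hs]
    have iΔabst : IntervalIntegrable (fun s => Real.exp B * |Δ s|) MeasureTheory.volume 0 t := by
      refine aux_intervalIntegrable (measurable_const.mul mΔ.abs) (C := Real.exp B * (2 * B))
        (fun s hs => ?_) ht.1 (ht.2.trans hτ1)
      show |(Real.exp B * |Δ s|)| ≤ Real.exp B * (2 * B)
      rw [abs_of_nonneg (mul_nonneg (Real.exp_pos _).le (abs_nonneg _))]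
      exact mul_le_mul_of_nonneg_left (hbΔ s hs) (Real.exp_pos _).le
    have e1 : Λ₁ t - Λ₂ t = ∫ s in (0:ℝ)..t, (e₁ s - e₂ s) :=
      (intervalIntegral.integral_sub ie₁ ie₂).symm
    calc |Λ₁ t - Λ₂ t| = |∫ s in (0:ℝ)..t, (e₁ s - e₂ s)| := by rw [e1]
      _ ≤ ∫ s in (0:ℝ)..t, |e₁ s - e₂ s| :=
          intervalIntegral.abs_integral_le_integral_abs ht.1
      _ ≤ ∫ s in (0:ℝ)..t, Real.exp B * |Δ s| := by
          refine intervalIntegral.integral_mono_on ht.1 idif iΔabst fun s hs => ?_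
          have hs1 := hsub hs
          have := aux_abs_exp_sub_exp (B := B) (abs_le.1 (hb₁ s hs1)).2 (abs_le.1 (hb₂ s hs1)).2
          simpa [he₁, he₂, hΔ] using this
      _ ≤ ∫ s in (0:ℝ)..τ, Real.exp B * |Δ s| := by
          refine intervalIntegral.integral_mono_interval le_rfl ht.1 ht.2 ?_ iΔabs
          exact Filter.Eventually.of_forall fun s =>
            mul_nonneg (Real.exp_pos _).le (abs_nonneg _)
      _ = M := by rw [hM, intervalIntegral.integral_const_mul]
  -- pointwise bound on the survival difference
  have hpt : ∀ t ∈ Set.Icc (0:ℝ) τ,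
      (Real.exp (-(Λ₁ t)) - Real.exp (-(Λ₂ t))) ^ 2 ≤ M ^ 2 := by
    intro t ht
    have h1 : |Real.exp (-(Λ₁ t)) - Real.exp (-(Λ₂ t))| ≤ |Λ₁ t - Λ₂ t| := by
      have := aux_abs_exp_sub_exp (B := 0)
        (neg_nonpos.2 (hΛ₁0 t ht)) (neg_nonpos.2 (hΛ₂0 t ht))
      rw [Real.exp_zero, one_mul, neg_sub_neg, abs_sub_comm (Λ₂ t) (Λ₁ t)] at this
      exact this
    have h2 : |Real.exp (-(Λ₁ t)) - Real.exp (-(Λ₂ t))| ≤ M := h1.trans (hΛdiff t ht)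
    calc (Real.exp (-(Λ₁ t)) - Real.exp (-(Λ₂ t))) ^ 2
        = |Real.exp (-(Λ₁ t)) - Real.exp (-(Λ₂ t))| ^ 2 := (sq_abs _).symm
      _ ≤ M ^ 2 := by nlinarith [abs_nonneg (Real.exp (-(Λ₁ t)) - Real.exp (-(Λ₂ t)))]
  -- continuity and integrability of the survival difference
  have hcont : ContinuousOn (fun t => (Real.exp (-(Λ₁ t)) - Real.exp (-(Λ₂ t))) ^ 2)
      (Set.uIcc (0:ℝ) τ) := by
    have iΛ₁ : MeasureTheory.IntegrableOn e₁ (Set.uIcc (0:ℝ) τ) MeasureTheory.volume := by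
      rw [Set.uIcc_of_le hτ0.le, integrableOn_Icc_iff_integrableOn_Ioc]
      exact (aux_intervalIntegrable me₁ hbe₁ hτ0.le hτ1).1
    have iΛ₂ : MeasureTheory.IntegrableOn e₂ (Set.uIcc (0:ℝ) τ) MeasureTheory.volume := by
      rw [Set.uIcc_of_le hτ0.le, integrableOn_Icc_iff_integrableOn_Ioc]
      exact (aux_intervalIntegrable me₂ hbe₂ hτ0.le hτ1).1
    have hc₁ : ContinuousOn Λ₁ (Set.uIcc (0:ℝ) τ) :=
      intervalIntegral.continuousOn_primitive_interval iΛ₁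
    have hc₂ : ContinuousOn Λ₂ (Set.uIcc (0:ℝ) τ) :=
      intervalIntegral.continuousOn_primitive_interval iΛ₂
    exact ((Real.continuous_exp.comp_continuousOn hc₁.neg).sub
      (Real.continuous_exp.comp_continuousOn hc₂.neg)).pow 2
  have hSint : IntervalIntegrable (fun t => (Real.exp (-(Λ₁ t)) - Real.exp (-(Λ₂ t))) ^ 2)
      MeasureTheory.volume 0 τ := hcont.intervalIntegrable
  -- bound the outer integral by τ * M²
  have step1 : (∫ t in (0:ℝ)..τ, (Real.exp (-(Λ₁ t)) - Real.exp (-(Λ₂ t))) ^ 2)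
      ≤ τ * M ^ 2 := by
    calc (∫ t in (0:ℝ)..τ, (Real.exp (-(Λ₁ t)) - Real.exp (-(Λ₂ t))) ^ 2)
        ≤ ∫ _t in (0:ℝ)..τ, M ^ 2 :=
          intervalIntegral.integral_mono_on hτ0.le hSint intervalIntegrable_const hpt
      _ = τ * M ^ 2 := by simp
  -- Cauchy–Schwarz for ∫ |Δ|
  have hCS : (∫ s in (0:ℝ)..τ, |Δ s|) ^ 2 ≤ τ * ∫ s in (0:ℝ)..τ, Δ s ^ 2 := by
    haveI : MeasureTheory.IsFiniteMeasure
        (MeasureTheory.volume.restrict (Set.Ioc (0:ℝ) τ)) := by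
      constructor
      rw [Measure.restrict_apply_univ, Real.volume_Ioc]
      exact ENNReal.ofReal_lt_top
    have iabs : Integrable (fun s => |Δ s|)
        (MeasureTheory.volume.restrict (Set.Ioc (0:ℝ) τ)) := by
      have := aux_intervalIntegrable mΔ.abs (C := 2 * B)
        (fun s hs => by rw [abs_abs]; exact hbΔ s hs) hτ0.le hτ1
      exact this.1
    have isq : Integrable (fun s => |Δ s| ^ 2)
        (MeasureTheory.volume.restrict (Set.Ioc (0:ℝ) τ)) := by
      have h := iΔsq.1
      refine h.congr (Filter.Eventually.of_forall fun s => ?_)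
      exact (sq_abs _).symm
    have key := aux_sq_integral_le (MeasureTheory.volume.restrict (Set.Ioc (0:ℝ) τ))
      (fun s => |Δ s|) iabs isq
    have hμ : ((MeasureTheory.volume.restrict (Set.Ioc (0:ℝ) τ)) Set.univ).toReal = τ := by
      rw [Measure.restrict_apply_univ, Real.volume_Ioc, sub_zero,
        ENNReal.toReal_ofReal hτ0.le]
    rw [hμ] at key
    rw [intervalIntegral.integral_of_le hτ0.le, intervalIntegral.integral_of_le hτ0.le]
    calc (∫ s in Set.Ioc (0:ℝ) τ, |Δ s|) ^ 2
        ≤ τ * ∫ s in Set.Ioc (0:ℝ) τ, |Δ s| ^ 2 := key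
      _ = τ * ∫ s in Set.Ioc (0:ℝ) τ, Δ s ^ 2 := by
          congr 1
          exact MeasureTheory.integral_congr_ae (Filter.Eventually.of_forall fun s => sq_abs _)
  -- combine
  have hIsq : (0:ℝ) ≤ ∫ s in (0:ℝ)..τ, Δ s ^ 2 :=
    intervalIntegral.integral_nonneg hτ0.le fun u _ => sq_nonneg _
  have hM2 : M ^ 2 = Real.exp (2 * B) * (∫ s in (0:ℝ)..τ, |Δ s|) ^ 2 := by
    rw [hM, mul_pow, two_mul, Real.exp_add]
    ring
  have hexp2B : (0:ℝ) < Real.exp (2 * B) := Real.exp_pos _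
  calc (∫ t in (0:ℝ)..τ,
        (Real.exp (-(∫ s in (0:ℝ)..t, Real.exp (f₁ s)))
          - Real.exp (-(∫ s in (0:ℝ)..t, Real.exp (f₂ s)))) ^ 2)
      ≤ τ * M ^ 2 := step1
    _ = τ * (Real.exp (2 * B) * (∫ s in (0:ℝ)..τ, |Δ s|) ^ 2) := by rw [hM2]
    _ ≤ τ * (Real.exp (2 * B) * (τ * ∫ s in (0:ℝ)..τ, Δ s ^ 2)) := by
        refine mul_le_mul_of_nonneg_left (mul_le_mul_of_nonneg_left hCS hexp2B.le) hτ0.le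
    _ ≤ Real.exp (2 * B) * ∫ s in (0:ℝ)..τ, (f₁ s - f₂ s) ^ 2 := by
        have : (∫ s in (0:ℝ)..τ, Δ s ^ 2) = ∫ s in (0:ℝ)..τ, (f₁ s - f₂ s) ^ 2 := rfl
        rw [← this]
        have hτ2 : 0 ≤ 1 - τ * τ := by nlinarith
        nlinarith [mul_nonneg hexp2B.le hIsq, hτ2]

/-- **Survival-function `L²` stability.** Let `τ ∈ (0,1]`, `B ≥ 0`, `P_X` a Borel probability
measure concentrated on `[0,1]^d`, and `g₁, g₂` measurable log-hazards with `‖gᵢ‖_∞ ≤ B`.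
With `S_g(t|x) = exp(−Λ_g(t|x))`,
`∫∫_0^τ (S_{g₁}(t|x) − S_{g₂}(t|x))² dt dP_X ≤ e^{2B} ∫∫_0^τ (g₁(x,s) − g₂(x,s))² ds dP_X`. -/
theorem survival_L2_stability
    (d : ℕ) (τ B : ℝ) (hτ : τ ∈ Set.Ioc (0 : ℝ) 1) (hB : 0 ≤ B)
    (PX : Measure (Fin d → ℝ)) [IsProbabilityMeasure PX]
    (hPX : PX (Set.Icc (0 : Fin d → ℝ) 1) = 1)
    (g₁ g₂ : (Fin d → ℝ) → ℝ → ℝ)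
    (hm₁ : Measurable (Function.uncurry g₁)) (hm₂ : Measurable (Function.uncurry g₂))
    (hb₁ : ∀ x ∈ Set.Icc (0 : Fin d → ℝ) 1, ∀ t ∈ Set.Icc (0 : ℝ) 1, |g₁ x t| ≤ B)
    (hb₂ : ∀ x ∈ Set.Icc (0 : Fin d → ℝ) 1, ∀ t ∈ Set.Icc (0 : ℝ) 1, |g₂ x t| ≤ B) :
    (∫ x, (∫ t in (0 : ℝ)..τ,
        (Real.exp (-(cumHaz d g₁ x t)) - Real.exp (-(cumHaz d g₂ x t))) ^ 2) ∂PX) ≤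
      Real.exp (2 * B) * ∫ x, (∫ s in (0 : ℝ)..τ, (g₁ x s - g₂ x s) ^ 2) ∂PX := by
  obtain ⟨hτ0, hτ1⟩ := hτ
  have haeIcc : ∀ᵐ x ∂PX, x ∈ Set.Icc (0 : Fin d → ℝ) 1 := by
    have h0 : PX (Set.Icc (0 : Fin d → ℝ) 1)ᶜ = 0 := by
      rw [measure_compl measurableSet_Icc (measure_ne_top _ _), hPX, measure_univ, tsub_self]
    exact MeasureTheory.mem_ae_iff.mpr h0
  -- a.e. pointwise bound
  have hae : ∀ᵐ x ∂PX,
      (∫ t in (0:ℝ)..τ,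
          (Real.exp (-(cumHaz d g₁ x t)) - Real.exp (-(cumHaz d g₂ x t))) ^ 2)
        ≤ Real.exp (2 * B) * ∫ s in (0:ℝ)..τ, (g₁ x s - g₂ x s) ^ 2 := by
    filter_upwards [haeIcc] with x hx
    have := aux_key τ B hτ0 hτ1 hB (g₁ x) (g₂ x)
      (hm₁.comp measurable_prodMk_left) (hm₂.comp measurable_prodMk_left)
      (hb₁ x hx) (hb₂ x hx)
    simpa [cumHaz] using this
  -- nonnegativity of the LHS integrand
  have h0 : 0 ≤ᵐ[PX] fun x => ∫ t in (0:ℝ)..τ,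
      (Real.exp (-(cumHaz d g₁ x t)) - Real.exp (-(cumHaz d g₂ x t))) ^ 2 :=
    Filter.Eventually.of_forall fun x =>
      intervalIntegral.integral_nonneg hτ0.le fun u _ => sq_nonneg _
  -- measurability of the RHS integrand
  have hGmeas : StronglyMeasurable
      (fun x => ∫ s in (0:ℝ)..τ, (g₁ x s - g₂ x s) ^ 2) := by
    have h1 : (fun x => ∫ s in (0:ℝ)..τ, (g₁ x s - g₂ x s) ^ 2)
        = fun x => ∫ s, ((fun p : (Fin d → ℝ) × ℝ => (g₁ p.1 p.2 - g₂ p.1 p.2) ^ 2) (x, s))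
            ∂(MeasureTheory.volume.restrict (Set.Ioc (0:ℝ) τ)) := by
      funext x
      rw [intervalIntegral.integral_of_le hτ0.le]
    rw [h1]
    exact (((hm₁.sub hm₂).pow_const 2).stronglyMeasurable).integral_prod_right'
  -- integrability of the RHS integrand
  have hGint : Integrable
      (fun x => Real.exp (2 * B) * ∫ s in (0:ℝ)..τ, (g₁ x s - g₂ x s) ^ 2) PX := by
    refine Integrable.mono' (integrable_const (Real.exp (2 * B) * (2 * B) ^ 2))
      ((hGmeas.const_mul (Real.exp (2 * B))).aestronglyMeasurable) ?_
    filter_upwards [haeIcc] with x hx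
    have hbd : ∀ s ∈ Set.Icc (0:ℝ) 1, |(g₁ x s - g₂ x s) ^ 2| ≤ (2 * B) ^ 2 := by
      intro s hs
      rw [abs_of_nonneg (sq_nonneg _)]
      have h1 := hb₁ x hx s hs
      have h2 := hb₂ x hx s hs
      have habs : |g₁ x s - g₂ x s| ≤ 2 * B := by
        calc |g₁ x s - g₂ x s| ≤ |g₁ x s| + |g₂ x s| := abs_sub _ _
          _ ≤ 2 * B := by linarith
      calc (g₁ x s - g₂ x s) ^ 2 = |g₁ x s - g₂ x s| ^ 2 := (sq_abs _).symm
        _ ≤ (2 * B) ^ 2 := by nlinarith [abs_nonneg (g₁ x s - g₂ x s)]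
    have hii : IntervalIntegrable (fun s => (g₁ x s - g₂ x s) ^ 2)
        MeasureTheory.volume 0 τ :=
      aux_intervalIntegrable
        (((hm₁.comp measurable_prodMk_left).sub (hm₂.comp measurable_prodMk_left)).pow_const 2)
        hbd hτ0.le hτ1
    have hint_nonneg : (0:ℝ) ≤ ∫ s in (0:ℝ)..τ, (g₁ x s - g₂ x s) ^ 2 :=
      intervalIntegral.integral_nonneg hτ0.le fun u _ => sq_nonneg _
    rw [Real.norm_eq_abs, abs_of_nonneg (mul_nonneg (Real.exp_pos _).le hint_nonneg)]
    refine mul_le_mul_of_nonneg_left ?_ (Real.exp_pos _).le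
    calc (∫ s in (0:ℝ)..τ, (g₁ x s - g₂ x s) ^ 2)
        ≤ ∫ _s in (0:ℝ)..τ, (2 * B) ^ 2 :=
          intervalIntegral.integral_mono_on hτ0.le hii intervalIntegrable_const
            (fun s hs => by
              have := hbd s ⟨hs.1, hs.2.trans hτ1⟩
              rwa [abs_of_nonneg (sq_nonneg _)] at this)
      _ = τ * (2 * B) ^ 2 := by simp
      _ ≤ (2 * B) ^ 2 := by nlinarith [sq_nonneg (2 * B)]
  calc (∫ x, (∫ t in (0 : ℝ)..τ,
        (Real.exp (-(cumHaz d g₁ x t)) - Real.exp (-(cumHaz d g₂ x t))) ^ 2) ∂PX)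
      ≤ ∫ x, (Real.exp (2 * B) * ∫ s in (0:ℝ)..τ, (g₁ x s - g₂ x s) ^ 2) ∂PX :=
        integral_mono_of_nonneg h0 hGint hae
    _ = Real.exp (2 * B) * ∫ x, (∫ s in (0 : ℝ)..τ, (g₁ x s - g₂ x s) ^ 2) ∂PX :=
        MeasureTheory.integral_const_mul _ _
end
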